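/- Uniform exclusion of the boundary region: Fix α ∈ (0,1). Let M := max_{1≤i≤m} log(1/q_i), and for η > 0 define B(η) := max_{1≤i≤m} [ (1 − p_i/2)·M + (p_i/2)·log η ]. Then B(η) → −∞ as η ↓ 0, and for every fixed η > 0 there exists n_0 such that for all n ≥ n_0 and every W ∈ W̄ with min_{1≤i≤m} W_i < η, one has Q_{n,α}(W) ≤ exp(n · B(η)). -/
import Mathlib


open Finset Filter Topology
open scoped Classical

noncomputable section

/-- The closed Arrow–Debreu wealth simplex `{W ∈ [0,∞)^m : Σ q_i W_i = 1}`. -/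
def closedSimplex {m : ℕ} (q : Fin m → ℝ) : Set (Fin m → ℝ) :=
  {W | (∀ i, 0 ≤ W i) ∧ ∑ i, q i * W i = 1}

/-- The open Arrow–Debreu wealth simplex `{W ∈ (0,∞)^m : Σ q_i W_i = 1}`. -/
def openSimplex {m : ℕ} (q : Fin m → ℝ) : Set (Fin m → ℝ) :=
  {W | (∀ i, 0 < W i) ∧ ∑ i, q i * W i = 1}

/-- The finite set `C_n` of count vectors `k : Fin m → ℕ` with `Σ k_i = n`. -/
def countFinset (m n : ℕ) : Finset (Fin m → ℕ) :=
  (Fintype.piFinset fun _ : Fin m => Finset.range (n + 1)).filter fun k => ∑ i, k i = n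

/-- The monomial `W^k := Π_i W_i^{k_i}` (with the convention `0^0 = 1`). -/
def mono {m : ℕ} (W : Fin m → ℝ) (k : Fin m → ℕ) : ℝ := ∏ i, W i ^ k i

/-- The multinomial probability `π_k = (n!/(k_1!⋯k_m!))·Π p_i^{k_i}`. -/
def countProb {m : ℕ} (p : Fin m → ℝ) (k : Fin m → ℕ) : ℝ :=
  (Nat.multinomial Finset.univ k : ℝ) * ∏ i, p i ^ k i

/-- The upper α-quantile of terminal wealth
`Q_{n,α}(W) := sup{t ∈ [0,∞) : Σ_{k ∈ C_n : W^k ≥ t} π_k ≥ α}`. -/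
def upperQuantile {m : ℕ} (p : Fin m → ℝ) (n : ℕ) (α : ℝ) (W : Fin m → ℝ) : ℝ :=
  sSup {t : ℝ | 0 ≤ t ∧
    α ≤ ∑ k ∈ countFinset m n, if t ≤ mono W k then countProb p k else 0}

/-- The union of the count hyperplanes `H_{k,ℓ}`. -/
def hyperUnion (m n : ℕ) : Set (Fin m → ℝ) :=
  {u | ∃ k ∈ countFinset m n, ∃ l ∈ countFinset m n,
    k ≠ l ∧ ∑ i, ((k i : ℝ) - (l i : ℝ)) * u i = 0}

/-- A chamber is a connected component of the complement of the count arrangement. -/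
def IsChamber (m n : ℕ) (Γ : Set (Fin m → ℝ)) : Prop :=
  ∃ u ∈ (hyperUnion m n)ᶜ, Γ = connectedComponentIn (hyperUnion m n)ᶜ u

/-- `F_Γ := {W ∈ W⁺⁺ : log W ∈ Γ}`. -/
def chamberFace {m : ℕ} (q : Fin m → ℝ) (Γ : Set (Fin m → ℝ)) : Set (Fin m → ℝ) :=
  {W | W ∈ openSimplex q ∧ (fun i => Real.log (W i)) ∈ Γ}

/-- `k` is the quantile count vector `k_{α,Γ}` of the chamber `Γ`: the tail mass at `W^k`
is at least `α`, while the strict tail mass is below `α`, for every `W ∈ F_Γ`. -/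
def IsQuantileVec {m : ℕ} (p q : Fin m → ℝ) (n : ℕ) (α : ℝ) (Γ : Set (Fin m → ℝ))
    (k : Fin m → ℕ) : Prop :=
  k ∈ countFinset m n ∧
  ∀ W ∈ chamberFace q Γ,
    α ≤ (∑ l ∈ countFinset m n, if mono W k ≤ mono W l then countProb p l else 0) ∧
    (∑ l ∈ countFinset m n, if mono W k < mono W l then countProb p l else 0) < α

lemma countFinset_eq (m n : ℕ) : countFinset m n = Finset.piAntidiag Finset.univ n := by
  ext k
  simp only [countFinset, mem_filter, Fintype.mem_piFinset, mem_range, Finset.mem_piAntidiag]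
  constructor
  · rintro ⟨-, h⟩; exact ⟨h, fun i _ => mem_univ i⟩
  · rintro ⟨h, -⟩
    refine ⟨fun i => Nat.lt_succ_of_le ?_, h⟩
    rw [← h]; exact Finset.single_le_sum (fun _ _ => Nat.zero_le _) (mem_univ i)

lemma countProb_nonneg {m : ℕ} {p : Fin m → ℝ} (hp : ∀ i, 0 ≤ p i) (k : Fin m → ℕ) :
    0 ≤ countProb p k := by
  unfold countProb
  apply mul_nonneg (Nat.cast_nonneg _)
  exact Finset.prod_nonneg fun i _ => pow_nonneg (hp i) _

lemma gen_sum {m : ℕ} (p : Fin m → ℝ) (n : ℕ) (j : Fin m) (x : ℝ) :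
    ∑ k ∈ countFinset m n, countProb p k * x ^ k j
      = (∑ i, (if i = j then p i * x else p i)) ^ n := by
  rw [countFinset_eq, Finset.sum_pow_eq_sum_piAntidiag]
  refine Finset.sum_congr rfl fun k hk => ?_
  rw [countProb]
  have h1 : ∀ i : Fin m, (if i = j then p i * x else p i) ^ k i
      = p i ^ k i * (if i = j then x ^ k i else 1) := by
    intro i; split <;> simp [mul_pow]
  rw [Finset.prod_congr rfl fun i _ => h1 i, Finset.prod_mul_distrib,
    Finset.prod_ite_eq' Finset.univ j (fun i => x ^ k i)]
  simp only [mem_univ, if_true]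
  ring

lemma tail_bound {m : ℕ} (p : Fin m → ℝ) (hp : ∀ i, 0 < p i ∧ p i < 1)
    (hpsum : ∑ i, p i = 1) (n : ℕ) (j : Fin m) :
    ∑ k ∈ (countFinset m n).filter (fun k => (k j : ℝ) < n * p j / 2), countProb p k
      ≤ Real.exp ((n : ℝ) * (p j / 2 * Real.log 2 + Real.log (1 - p j / 2))) := by
  have hpj := hp j
  have h2 : (0:ℝ) < 1 - p j / 2 := by linarith
  set E : ℝ := Real.exp ((n : ℝ) * p j / 2 * Real.log 2) with hE
  have step1 : ∀ k ∈ (countFinset m n).filter (fun k => (k j : ℝ) < n * p j / 2),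
      countProb p k ≤ countProb p k * (1/2 : ℝ) ^ k j * E := by
    intro k hk
    have hkj : (k j : ℝ) ≤ (n : ℝ) * p j / 2 := ((mem_filter.1 hk).2).le
    have hone : (1:ℝ) ≤ (1/2 : ℝ) ^ k j * E := by
      have : (1/2 : ℝ) ^ k j = Real.exp (-(k j : ℝ) * Real.log 2) := by
        rw [show ((1:ℝ)/2) = Real.exp (Real.log (1/2)) from
          (Real.exp_log (by norm_num)).symm, ← Real.exp_nat_mul]
        congr 1
        rw [one_div, Real.log_inv]
        ring
      rw [this, hE, ← Real.exp_add, ← Real.exp_zero]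
      apply Real.exp_le_exp.2
      have hlog2 : (0:ℝ) < Real.log 2 := Real.log_pos (by norm_num)
      nlinarith
    calc countProb p k = countProb p k * 1 := (mul_one _).symm
      _ ≤ countProb p k * ((1/2 : ℝ) ^ k j * E) := by
          exact mul_le_mul_of_nonneg_left hone (countProb_nonneg (fun i => (hp i).1.le) k)
      _ = countProb p k * (1/2 : ℝ) ^ k j * E := by ring
  calc ∑ k ∈ (countFinset m n).filter (fun k => (k j : ℝ) < n * p j / 2), countProb p k
      ≤ ∑ k ∈ (countFinset m n).filter (fun k => (k j : ℝ) < n * p j / 2),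
          countProb p k * (1/2 : ℝ) ^ k j * E := Finset.sum_le_sum step1
    _ ≤ ∑ k ∈ countFinset m n, countProb p k * (1/2 : ℝ) ^ k j * E := by
        apply Finset.sum_le_sum_of_subset_of_nonneg (Finset.filter_subset _ _)
        intro k _ _
        have := countProb_nonneg (fun i => (hp i).1.le) k
        have hEpos : 0 < E := Real.exp_pos _
        positivity
    _ = (∑ k ∈ countFinset m n, countProb p k * (1/2 : ℝ) ^ k j) * E := by
        rw [Finset.sum_mul]
    _ = (∑ i, (if i = j then p i * (1/2) else p i)) ^ n * E := by rw [gen_sum]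
    _ = ((∑ i, p i) - p j * (1/2)) ^ n * E := by
        congr 2
        have : ∀ i : Fin m, (if i = j then p i * (1/2:ℝ) else p i)
            = p i - (if i = j then p i * (1/2) else 0) := by
          intro i; split <;> ring
        rw [Finset.sum_congr rfl fun i _ => this i, Finset.sum_sub_distrib,
          Finset.sum_ite_eq' Finset.univ j (fun i => p i * (1/2))]
        simp
    _ ≤ Real.exp ((n : ℝ) * (p j / 2 * Real.log 2 + Real.log (1 - p j / 2))) := by
        rw [hpsum, hE]
        have : ((1:ℝ) - p j * (1/2)) ^ n = Real.exp ((n : ℝ) * Real.log (1 - p j / 2)) := by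
          rw [show (1:ℝ) - p j * (1/2) = Real.exp (Real.log (1 - p j / 2)) by
            rw [Real.exp_log h2]; ring, ← Real.exp_nat_mul]
        rw [this, ← Real.exp_add]
        apply Real.exp_le_exp.2
        ring_nf
        exact le_refl _


/-- **Uniform exclusion of the boundary region.** With `M = max_i log(1/q_i)` and
`B(η) = max_i [(1 − p_i/2) M + (p_i/2) log η]`, one has `B(η) → −∞` as `η ↓ 0`, and for
every fixed `η > 0` there is `n₀` such that for all `n ≥ n₀` and every `W ∈ W̄` with
`min_i W_i < η`, `Q_{n,α}(W) ≤ exp(n B(η))`. -/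
theorem boundary_exclusion (m : ℕ) (hm : 2 ≤ m)
    (p q : Fin m → ℝ) (hp : ∀ i, 0 < p i ∧ p i < 1) (hpsum : ∑ i, p i = 1)
    (hq : ∀ i, 0 < q i) (α : ℝ) (hα : 0 < α ∧ α < 1) :
    Filter.Tendsto
      (fun η : ℝ => ⨆ i : Fin m,
        ((1 - p i / 2) * (⨆ j : Fin m, Real.log (1 / q j)) +
          (p i / 2) * Real.log η))
      (nhdsWithin 0 (Set.Ioi 0)) Filter.atBot ∧
    ∀ η : ℝ, 0 < η → ∃ n₀ : ℕ, ∀ n : ℕ, n₀ ≤ n →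
      ∀ W ∈ closedSimplex q, (∃ i, W i < η) →
        upperQuantile p n α W ≤
          Real.exp ((n : ℝ) * ⨆ i : Fin m,
            ((1 - p i / 2) * (⨆ j : Fin m, Real.log (1 / q j)) +
              (p i / 2) * Real.log η)) := by
  haveI : Nonempty (Fin m) := ⟨⟨0, by omega⟩⟩
  set M : ℝ := ⨆ j : Fin m, Real.log (1 / q j) with hMdef
  constructor
  · rw [tendsto_atBot]
    intro b
    have h : ∀ i : Fin m, ∀ᶠ η in 𝓝[>] (0:ℝ),
        (1 - p i / 2) * M + (p i / 2) * Real.log η ≤ b := by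
      intro i
      have hT : Tendsto (fun η : ℝ => (1 - p i / 2) * M + (p i / 2) * Real.log η)
          (𝓝[>] (0:ℝ)) atBot := by
        apply tendsto_atBot_add_const_left
        exact Real.tendsto_log_nhdsGT_zero.const_mul_atBot
          (by linarith [(hp i).1])
      exact hT.eventually (eventually_le_atBot b)
    filter_upwards [eventually_all.2 h] with η hη
    exact ciSup_le hη
  · intro η hη
    set d : Fin m → ℝ := fun j => p j / 2 * Real.log 2 + Real.log (1 - p j / 2) with hd
    have hdneg : ∀ j, d j < 0 := by
      intro j
      have h1 : Real.log (1 - p j / 2) ≤ (1 - p j / 2) - 1 :=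
        Real.log_le_sub_one_of_pos (by linarith [(hp j).2])
      have h2 : Real.log 2 < 1 := by
        have := Real.log_two_lt_d9; linarith
      have := (hp j).1
      simp only [hd]
      nlinarith
    have hev : ∀ᶠ n : ℕ in atTop, ∀ j : Fin m, Real.exp ((n : ℝ) * d j) < α := by
      rw [Filter.eventually_all]
      intro j
      have h1 : Tendsto (fun n : ℕ => Real.exp ((n : ℝ) * d j)) atTop (𝓝 0) := by
        apply Real.tendsto_exp_atBot.comp
        exact (tendsto_natCast_atTop_atTop (R := ℝ)).atTop_mul_const_of_neg (hdneg j)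
      exact h1.eventually_lt_const hα.1
    obtain ⟨n₀, hn₀⟩ := eventually_atTop.1 hev
    refine ⟨n₀, fun n hn W hW hex => ?_⟩
    obtain ⟨j, hWj⟩ := hex
    set B : ℝ := ⨆ i : Fin m, ((1 - p i / 2) * M + p i / 2 * Real.log η) with hBdef
    have hBj : (1 - p j / 2) * M + p j / 2 * Real.log η ≤ B := by
      rw [hBdef]
      exact le_ciSup (f := fun i => (1 - p i / 2) * M + p i / 2 * Real.log η)
        (Set.Finite.bddAbove (Set.finite_range _)) j
    have hWle : ∀ i, W i ≤ Real.exp M := by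
      intro i
      have h1 : q i * W i ≤ 1 := by
        rw [← hW.2]
        exact Finset.single_le_sum
          (fun i _ => mul_nonneg (hq i).le (hW.1 i)) (mem_univ i)
      have h2 : W i ≤ 1 / q i := by
        rw [le_div_iff₀ (hq i)]; linarith [mul_comm (q i) (W i)]
      calc W i ≤ 1 / q i := h2
        _ = Real.exp (Real.log (1 / q i)) := (Real.exp_log (one_div_pos.2 (hq i))).symm
        _ ≤ Real.exp M := by
            rw [Real.exp_le_exp, hMdef]
            exact le_ciSup (f := fun j => Real.log (1 / q j))
              (Set.Finite.bddAbove (Set.finite_range _)) i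
    apply Real.sSup_le _ (Real.exp_nonneg _)
    rintro t ⟨ht0, htα⟩
    rw [← Finset.sum_filter] at htα
    set A : Finset (Fin m → ℕ) := (countFinset m n).filter (fun k => t ≤ mono W k) with hA
    have hsplit := Finset.sum_filter_add_sum_filter_not A
      (fun k => (k j : ℝ) < (n : ℝ) * p j / 2) (countProb p)
    have hsmall : ∑ k ∈ A.filter (fun k => (k j : ℝ) < (n : ℝ) * p j / 2), countProb p k
        < α := by
      have hsub : A.filter (fun k => (k j : ℝ) < (n : ℝ) * p j / 2)
          ⊆ (countFinset m n).filter (fun k => (k j : ℝ) < (n : ℝ) * p j / 2) := by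
        intro k hk
        simp only [hA, mem_filter] at hk ⊢
        exact ⟨hk.1.1, hk.2⟩
      calc ∑ k ∈ A.filter (fun k => (k j : ℝ) < (n : ℝ) * p j / 2), countProb p k
          ≤ ∑ k ∈ (countFinset m n).filter (fun k => (k j : ℝ) < (n : ℝ) * p j / 2),
              countProb p k :=
            Finset.sum_le_sum_of_subset_of_nonneg hsub
              (fun k _ _ => countProb_nonneg (fun i => (hp i).1.le) k)
        _ ≤ Real.exp ((n : ℝ) * d j) := tail_bound p hp hpsum n j
        _ < α := hn₀ n hn j
    have hbig : (A.filter (fun k => ¬ ((k j : ℝ) < (n : ℝ) * p j / 2))).Nonempty := by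
      by_contra h
      rw [Finset.not_nonempty_iff_eq_empty] at h
      rw [h, Finset.sum_empty, add_zero] at hsplit
      linarith
    obtain ⟨k, hk⟩ := hbig
    simp only [hA, mem_filter, not_lt] at hk
    obtain ⟨⟨hkC, hkt⟩, hkj⟩ := hk
    have hksum : ∑ i, k i = n := by
      simpa [countFinset] using (mem_filter.1 hkC).2
    have hkjn : k j ≤ n := by
      rw [← hksum]
      exact Finset.single_le_sum (fun _ _ => Nat.zero_le _) (mem_univ j)
    -- two bounds on mono W k
    have hmono_all : mono W k ≤ Real.exp (M * n) := by
      calc mono W k ≤ ∏ i, Real.exp M ^ k i :=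
            Finset.prod_le_prod (fun i _ => pow_nonneg (hW.1 i) _)
              (fun i _ => pow_le_pow_left₀ (hW.1 i) (hWle i) _)
        _ = Real.exp M ^ (∑ i, k i) := Finset.prod_pow_eq_pow_sum _ _ _
        _ = Real.exp (M * n) := by
            rw [hksum, ← Real.exp_nat_mul]; ring_nf
    have hmono_j : mono W k ≤ Real.exp ((k j : ℝ) * Real.log η + M * ((n : ℝ) - k j)) := by
      have hsplit2 : mono W k = W j ^ k j * ∏ i ∈ Finset.univ.erase j, W i ^ k i :=
        (Finset.mul_prod_erase Finset.univ _ (mem_univ j)).symm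
      have h1 : W j ^ k j ≤ Real.exp ((k j : ℝ) * Real.log η) := by
        calc W j ^ k j ≤ η ^ k j := pow_le_pow_left₀ (hW.1 j) hWj.le _
          _ = Real.exp ((k j : ℝ) * Real.log η) := by
              rw [show η = Real.exp (Real.log η) from (Real.exp_log hη).symm,
                ← Real.exp_nat_mul]
              rw [Real.log_exp]
      have h2 : ∏ i ∈ Finset.univ.erase j, W i ^ k i ≤ Real.exp (M * ((n : ℝ) - k j)) := by
        have hesum : ∑ i ∈ Finset.univ.erase j, k i = n - k j := by
          have h := Finset.sum_erase_add Finset.univ k (mem_univ j)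
          rw [hksum] at h
          omega
        calc ∏ i ∈ Finset.univ.erase j, W i ^ k i
            ≤ ∏ i ∈ Finset.univ.erase j, Real.exp M ^ k i :=
              Finset.prod_le_prod (fun i _ => pow_nonneg (hW.1 i) _)
                (fun i _ => pow_le_pow_left₀ (hW.1 i) (hWle i) _)
          _ = Real.exp M ^ (∑ i ∈ Finset.univ.erase j, k i) :=
              Finset.prod_pow_eq_pow_sum _ _ _
          _ = Real.exp (M * ((n : ℝ) - k j)) := by
              rw [hesum, ← Real.exp_nat_mul, Nat.cast_sub hkjn]
              ring_nf
      calc mono W k = W j ^ k j * ∏ i ∈ Finset.univ.erase j, W i ^ k i := hsplit2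
        _ ≤ Real.exp ((k j : ℝ) * Real.log η) * Real.exp (M * ((n : ℝ) - k j)) := by
            apply mul_le_mul h1 h2 (Finset.prod_nonneg fun i _ => pow_nonneg (hW.1 i) _)
              (Real.exp_nonneg _)
        _ = Real.exp ((k j : ℝ) * Real.log η + M * ((n : ℝ) - k j)) :=
            (Real.exp_add _ _).symm
    by_cases hcase : Real.log η ≤ M
    · have e1 : (k j : ℝ) * Real.log η + M * ((n : ℝ) - k j)
          ≤ (n : ℝ) * ((1 - p j / 2) * M + p j / 2 * Real.log η) := by
        have e2 : (k j : ℝ) * (Real.log η - M) ≤ ((n : ℝ) * p j / 2) * (Real.log η - M) :=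
          mul_le_mul_of_nonpos_right hkj (by linarith)
        nlinarith
      calc t ≤ mono W k := hkt
        _ ≤ Real.exp ((k j : ℝ) * Real.log η + M * ((n : ℝ) - k j)) := hmono_j
        _ ≤ Real.exp ((n : ℝ) * B) := by
            apply Real.exp_le_exp.2
            refine e1.trans ?_
            exact mul_le_mul_of_nonneg_left hBj (Nat.cast_nonneg n)
    · push_neg at hcase
      have e1 : M * (n : ℝ) ≤ (n : ℝ) * ((1 - p j / 2) * M + p j / 2 * Real.log η) := by
        have h0 : (0:ℝ) ≤ (n : ℝ) * (p j / 2) * (Real.log η - M) := by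
          apply mul_nonneg (mul_nonneg (Nat.cast_nonneg n) (by linarith [(hp j).1]))
          linarith
        nlinarith
      calc t ≤ mono W k := hkt
        _ ≤ Real.exp (M * n) := hmono_all
        _ ≤ Real.exp ((n : ℝ) * B) := by
            apply Real.exp_le_exp.2
            exact e1.trans (mul_le_mul_of_nonneg_left hBj (Nat.cast_nonneg n))
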